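/- arXiv:1712.03265 — 5 statements merged into one kernel-verified Lean document; each statement's English description precedes it below -/
import Mathlib

section
/- Define ϱ^1(t,x) := t/(|x| + t^{1/α})^{d+α}. There is a constant C > 0 depending only on d and α such that for all 0 < s < t and x, y, z ∈ ℝ^d with x ≠ y: ϱ^1(t-s, x-z) · ϱ^1(s, z-y) / ϱ^1(t, x-y) ≤ C · ((t-s)s/t) · ( ϱ^0(t-s, x-z) + ϱ^0(s, z-y) ), where ϱ^0(u,w) := 1/(|w| + u^{1/α})^{d+α}. -/
/-!
With `A = ‖x - z‖ + (t - s)^{1/α}`, `B = ‖z - y‖ + s^{1/α}` and `D = ‖x - y‖ + t^{1/α}`, the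
left-hand side equals `((t - s) s / t) · D^{d+α} / (A^{d+α} B^{d+α})`, while
`ϱ⁰(t - s, x - z) + ϱ⁰(s, z - y) = (A^{d+α} + B^{d+α}) / (A^{d+α} B^{d+α})`.
So it suffices that `D^{d+α} ≲ A^{d+α} + B^{d+α}`, which follows from the triangle inequality in
space and `t^{1/α} ≤ 2^{1/α} ((t - s)^{1/α} + s^{1/α})` in time.
-/

open Real

lemma Real.add_rpow_le_two_rpow_mul_rpow_add_rpow {a b p : ℝ} (ha : 0 ≤ a) (hb : 0 ≤ b)
    (hp : 0 ≤ p) : (a + b) ^ p ≤ 2 ^ p * (a ^ p + b ^ p) :=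
  calc (a + b) ^ p ≤ (2 * max a b) ^ p := by
        rw [two_mul]; gcongr; exacts [le_max_left a b, le_max_right a b]
    _ = 2 ^ p * max a b ^ p := mul_rpow zero_le_two (le_max_of_le_left ha)
    _ ≤ 2 ^ p * (a ^ p + b ^ p) := by
        gcongr
        rcases max_choice a b with h | h <;> rw [h] <;>
          linarith [rpow_nonneg ha p, rpow_nonneg hb p]

lemma norm_add_add_rpow_le {E : Type*} [SeminormedAddCommGroup E] {a b r : ℝ} (v w : E)
    (ha : 0 ≤ a) (hb : 0 ≤ b) (hr : 0 ≤ r) :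
    ‖v + w‖ + (a + b) ^ r ≤ 2 ^ r * ((‖v‖ + a ^ r) + (‖w‖ + b ^ r)) := by
  have hnorm : ‖v‖ + ‖w‖ ≤ 2 ^ r * (‖v‖ + ‖w‖) :=
    le_mul_of_one_le_left (by positivity) (one_le_rpow one_le_two hr)
  linarith [norm_add_le v w, add_rpow_le_two_rpow_mul_rpow_add_rpow ha hb hr]

lemma rpow_norm_add_add_rpow_le {E : Type*} [SeminormedAddCommGroup E] {a b r p : ℝ} (v w : E)
    (ha : 0 ≤ a) (hb : 0 ≤ b) (hr : 0 ≤ r) (hp : 0 ≤ p) :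
    (‖v + w‖ + (a + b) ^ r) ^ p
      ≤ 2 ^ (r * p) * 2 ^ p * ((‖v‖ + a ^ r) ^ p + (‖w‖ + b ^ r) ^ p) :=
  calc (‖v + w‖ + (a + b) ^ r) ^ p
        ≤ (2 ^ r * ((‖v‖ + a ^ r) + (‖w‖ + b ^ r))) ^ p :=
          rpow_le_rpow (by positivity) (norm_add_add_rpow_le v w ha hb hr) hp
    _ = 2 ^ (r * p) * ((‖v‖ + a ^ r) + (‖w‖ + b ^ r)) ^ p := by
          rw [mul_rpow (by positivity) (by positivity), ← rpow_mul zero_le_two]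
    _ ≤ 2 ^ (r * p) * 2 ^ p * ((‖v‖ + a ^ r) ^ p + (‖w‖ + b ^ r) ^ p) := by
          rw [mul_assoc]
          gcongr
          exact add_rpow_le_two_rpow_mul_rpow_add_rpow (by positivity) (by positivity) hp

lemma div_mul_div_div_le_mul_one_div_add_one_div {u v w A B D K : ℝ} (hw : 0 < w)
    (hA : 0 < A) (hB : 0 < B) (hD : 0 < D) (huv : 0 ≤ u * v) (hDAB : D ≤ K * (A + B)) :
    u / A * (v / B) / (w / D) ≤ K * (u * v / w) * (1 / A + 1 / B) := by
  have hlhs : u / A * (v / B) / (w / D) = u * v / w * (D / (A * B)) := by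
    field_simp
  have hrhs : K * (u * v / w) * (1 / A + 1 / B) = u * v / w * (K * (A + B) / (A * B)) := by
    field_simp
    ring
  rw [hlhs, hrhs]
  gcongr

theorem stmt_2_general (d : ℕ) (α : ℝ) (hα : 0 < α ∧ α < 2) :
    ∃ C > 0, ∀ (s t : ℝ), 0 < s → s < t →
      ∀ x y z : EuclideanSpace ℝ (Fin d), x ≠ y →
        ((t - s) / (‖x - z‖ + (t - s) ^ (1/α)) ^ ((d:ℝ) + α))
          * (s / (‖z - y‖ + s ^ (1/α)) ^ ((d:ℝ) + α))
          / (t / (‖x - y‖ + t ^ (1/α)) ^ ((d:ℝ) + α))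
        ≤ C * ((t - s) * s / t) *
            (1 / (‖x - z‖ + (t - s) ^ (1/α)) ^ ((d:ℝ) + α)
              + 1 / (‖z - y‖ + s ^ (1/α)) ^ ((d:ℝ) + α)) := by
  obtain ⟨hα, -⟩ := hα
  refine ⟨2 ^ (1 / α * ((d:ℝ) + α)) * 2 ^ ((d:ℝ) + α), by positivity, ?_⟩
  intro s t hs hst x y z _
  have hts : 0 < t - s := sub_pos.2 hst
  have ht : 0 < t := hs.trans hst
  have hspace_time := rpow_norm_add_add_rpow_le (x - z) (z - y) hts.le hs.le
    (one_div_pos.2 hα).le (by positivity : (0:ℝ) ≤ d + α)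
  rw [sub_add_sub_cancel, sub_add_cancel] at hspace_time
  exact div_mul_div_div_le_mul_one_div_add_one_div ht (by positivity) (by positivity)
    (by positivity) (by positivity) hspace_time

theorem stmt_2 (d : ℕ) (hd : 1 ≤ d) (α : ℝ) (hα : 0 < α ∧ α < 2) :
    ∃ C > 0, ∀ (s t : ℝ), 0 < s → s < t →
      ∀ x y z : EuclideanSpace ℝ (Fin d), x ≠ y →
        ((t - s) / (‖x - z‖ + (t - s) ^ (1/α)) ^ ((d:ℝ) + α))
          * (s / (‖z - y‖ + s ^ (1/α)) ^ ((d:ℝ) + α))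
          / (t / (‖x - y‖ + t ^ (1/α)) ^ ((d:ℝ) + α))
        ≤ C * ((t - s) * s / t) *
            (1 / (‖x - z‖ + (t - s) ^ (1/α)) ^ ((d:ℝ) + α)
              + 1 / (‖z - y‖ + s ^ (1/α)) ^ ((d:ℝ) + α)) :=
  stmt_2_general d α hα
end

section
/- Suppose for all t ∈ (0,T] and x,y ∈ D the function p^D satisfies C_1^{-1} q̃(t,x) q̃(t,y) ϱ^1(t,x-y) ≤ p^D(t,x,y) ≤ C_1 q̃(t,x) q̃(t,y) ϱ^1(t,x-y), where q̃(t,x) = min(1, ρ(x)^{α/2}/√t) and ϱ^1(t,w) = t/(|w|+t^{1/α})^{d+α}. Then there is a constant C > 0 such that for all 0 < s < t ≤ T and x, y, z ∈ D: p^D(t-s,x,z) · p^D(s,z,y) / p^D(t,x,y) ≤ C · ρ(z)^α · ( ϱ^0(t-s,x-z) + ϱ^0(s,z-y) ), where ϱ^0(u,w) = 1/(|w|+u^{1/α})^{d+α}. -/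
/-!
The factor at the middle point is bounded by `min 1 (ρ(z)^{α/2}/√u) ≤ ρ(z)^{α/2}/√u`, and the
factors at `x`, `y` at the shorter times by those at time `t`, because `u ↦ √u · min 1 (a/√u)` is
nondecreasing. All powers of `t - s` and `s` then cancel, leaving
`t ρ(z)^α q̃(t,x) q̃(t,y) ϱ⁰(t-s,x-z) ϱ⁰(s,z-y)`. Since `u ↦ u^{1/α}` is subadditive for `α ≥ 1`,
`|x-y| + t^{1/α} ≤ (|x-z| + (t-s)^{1/α}) + (|z-y| + s^{1/α})`, so the larger summand is at least
half the left side; this is the 3P inequality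
`ϱ⁰(t-s,x-z) ϱ⁰(s,z-y) ≤ 2^{d+α} ϱ⁰(t,x-y) (ϱ⁰(t-s,x-z) + ϱ⁰(s,z-y))`, and the lower estimate
of `p^D(t,x,y)` absorbs what remains.
-/

open Metric

/-- `ϱ⁰(t, w)` of the paper as a function of `r = |w|`, with `β` in place of `d + α`. -/
noncomputable def rhoZero (α β t r : ℝ) : ℝ := 1 / (r + t ^ (1 / α)) ^ β

/-- `q̃(t,x) q̃(t,y) ϱ¹(t, x - y)` of the paper, with `ρ` in place of `dist(·, Dᶜ)`. -/
noncomputable def heatKernelBound {E : Type*} [SeminormedAddCommGroup E] (ρ : E → ℝ)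
    (α β t : ℝ) (x y : E) : ℝ :=
  min 1 (ρ x ^ (α / 2) / √t) * min 1 (ρ y ^ (α / 2) / √t) * (t / (‖x - y‖ + t ^ (1 / α)) ^ β)

lemma rhoZero_nonneg {α β t r : ℝ} (ht : 0 ≤ t) (hr : 0 ≤ r) : 0 ≤ rhoZero α β t r := by
  unfold rhoZero
  positivity

lemma min_one_div_sqrt_le {a u t : ℝ} (hu : 0 < u) (hut : u ≤ t) :
    min 1 (a / √u) ≤ √t / √u * min 1 (a / √t) := by
  have hsu : 0 < √u := Real.sqrt_pos.2 hu
  have hst : 0 < √t := Real.sqrt_pos.2 (hu.trans_le hut)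
  rw [mul_min_of_nonneg _ _ (by positivity), mul_one,
    show √t / √u * (a / √t) = a / √u by field_simp]
  exact min_le_min_right _ ((one_le_div hsu).2 (Real.sqrt_le_sqrt hut))

lemma min_one_div_sqrt_mul_le {a b u t : ℝ} (ha : 0 ≤ a) (hb : 0 ≤ b) (hu : 0 < u)
    (hut : u ≤ t) :
    min 1 (a / √u) * min 1 (b / √u) * u ≤ √t * min 1 (a / √t) * b := by
  have hsu : 0 < √u := Real.sqrt_pos.2 hu
  calc min 1 (a / √u) * min 1 (b / √u) * u
      ≤ √t / √u * min 1 (a / √t) * (b / √u) * u := by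
        gcongr
        · exact min_one_div_sqrt_le hu hut
        · exact min_le_right _ _
    _ = √t * min 1 (a / √t) * b := by
        field_simp
        rw [Real.sq_sqrt hu.le]
        ring

lemma one_div_rpow_mul_one_div_rpow_le {a b c p : ℝ} (ha : 0 < a) (hb : 0 < b) (hc : 0 < c)
    (hcab : c ≤ a + b) (hp : 0 ≤ p) :
    1 / a ^ p * (1 / b ^ p) ≤ 2 ^ p * (1 / c ^ p) * (1 / a ^ p + 1 / b ^ p) := by
  wlog hab : a ≤ b generalizing a b
  · have := this hb ha (by linarith) (le_of_not_ge hab)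
    rwa [mul_comm (1 / b ^ p), add_comm (1 / b ^ p)] at this
  have hcb : c ^ p ≤ 2 ^ p * b ^ p := by
    rw [← Real.mul_rpow zero_le_two hb.le]
    gcongr
    linarith
  have hb' : 1 / b ^ p ≤ 2 ^ p * (1 / c ^ p) := by
    rw [mul_one_div, div_le_div_iff₀ (by positivity) (by positivity)]
    linarith
  calc 1 / a ^ p * (1 / b ^ p) ≤ 2 ^ p * (1 / c ^ p) * (1 / a ^ p) := by
        rw [mul_comm]
        gcongr
    _ ≤ 2 ^ p * (1 / c ^ p) * (1 / a ^ p + 1 / b ^ p) := by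
        gcongr
        exact le_add_of_nonneg_right (by positivity)

lemma rhoZero_mul_le {α β u v r r₁ r₂ : ℝ} (hα : 1 ≤ α) (hβ : 0 ≤ β) (hu : 0 < u) (hv : 0 < v)
    (hr₀ : 0 ≤ r) (hr₁ : 0 ≤ r₁) (hr₂ : 0 ≤ r₂) (hr : r ≤ r₁ + r₂) :
    rhoZero α β u r₁ * rhoZero α β v r₂
      ≤ 2 ^ β * rhoZero α β (u + v) r * (rhoZero α β u r₁ + rhoZero α β v r₂) := by
  have hα₀ : 0 < α := one_pos.trans_le hα
  have hsub : (u + v) ^ (1 / α) ≤ u ^ (1 / α) + v ^ (1 / α) :=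
    Real.rpow_add_le_add_rpow hu.le hv.le (by positivity) ((div_le_one hα₀).2 hα)
  exact one_div_rpow_mul_one_div_rpow_le (by positivity) (by positivity) (by positivity)
    (by linarith) hβ

lemma mul_div_le_of_comparable {C₁ K p₁ p₂ p b₁ b₂ b : ℝ} (hC₁ : 0 < C₁) (hK : 0 ≤ K)
    (hb₁ : 0 ≤ b₁) (hp₂ : 0 ≤ p₂) (hp : 0 ≤ p) (h₁ : p₁ ≤ C₁ * b₁) (h₂ : p₂ ≤ C₁ * b₂)
    (hlow : C₁⁻¹ * b ≤ p) (hb : b₁ * b₂ ≤ K * b) :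
    p₁ * p₂ / p ≤ C₁ ^ 3 * K := by
  refine div_le_of_le_mul₀ hp (by positivity) ?_
  calc p₁ * p₂ ≤ (C₁ * b₁) * (C₁ * b₂) := mul_le_mul h₁ h₂ hp₂ (by positivity)
    _ = C₁ ^ 2 * (b₁ * b₂) := by ring
    _ ≤ C₁ ^ 2 * (K * b) := by gcongr
    _ = C₁ ^ 3 * K * (C₁⁻¹ * b) := by field_simp
    _ ≤ C₁ ^ 3 * K * p := by gcongr

section heatKernelBound

variable {E : Type*} [SeminormedAddCommGroup E] {ρ : E → ℝ} {α β : ℝ}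

lemma heatKernelBound_nonneg (hρ : ∀ w, 0 ≤ ρ w) {t : ℝ} (ht : 0 ≤ t) (x y : E) :
    0 ≤ heatKernelBound ρ α β t x y := by
  have := hρ x
  have := hρ y
  unfold heatKernelBound
  positivity

lemma heatKernelBound_comm (t : ℝ) (x y : E) :
    heatKernelBound ρ α β t x y = heatKernelBound ρ α β t y x := by
  rw [heatKernelBound, heatKernelBound, norm_sub_rev, mul_comm (min 1 _)]

lemma heatKernelBound_le (hρ : ∀ w, 0 ≤ ρ w) {u t : ℝ} (hu : 0 < u) (hut : u ≤ t) (x z : E) :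
    heatKernelBound ρ α β u x z
      ≤ √t * min 1 (ρ x ^ (α / 2) / √t) * ρ z ^ (α / 2) * rhoZero α β u ‖x - z‖ := by
  have := hρ x
  have := hρ z
  calc heatKernelBound ρ α β u x z
      = min 1 (ρ x ^ (α / 2) / √u) * min 1 (ρ z ^ (α / 2) / √u) * u
          * rhoZero α β u ‖x - z‖ := by
        rw [heatKernelBound, rhoZero]
        ring
    _ ≤ _ := mul_le_mul_of_nonneg_right
        (min_one_div_sqrt_mul_le (by positivity) (by positivity) hu hut)
        (rhoZero_nonneg hu.le (norm_nonneg _))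

lemma heatKernelBound_mul_le (hρ : ∀ w, 0 ≤ ρ w) (hα : 1 ≤ α) (hβ : 0 ≤ β) {s t : ℝ}
    (hs : 0 < s) (hst : s < t) (x y z : E) :
    heatKernelBound ρ α β (t - s) x z * heatKernelBound ρ α β s z y
      ≤ 2 ^ β * ρ z ^ α * (rhoZero α β (t - s) ‖x - z‖ + rhoZero α β s ‖z - y‖)
        * heatKernelBound ρ α β t x y := by
  have ht : 0 < t := hs.trans hst
  have hts : 0 < t - s := sub_pos.2 hst
  have h₁ := heatKernelBound_le (α := α) (β := β) hρ hts (sub_le_self _ hs.le) x z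
  have h₂ := heatKernelBound_le (α := α) (β := β) hρ hs hst.le y z
  rw [← heatKernelBound_comm, norm_sub_rev] at h₂
  have h3P := rhoZero_mul_le hα hβ hts hs (norm_nonneg (x - y)) (norm_nonneg _) (norm_nonneg _)
    (norm_sub_le_norm_sub_add_norm_sub x z y)
  rw [sub_add_cancel] at h3P
  have hρz : ρ z ^ (α / 2) * ρ z ^ (α / 2) = ρ z ^ α := by
    rw [← Real.rpow_add' (hρ z) (by linarith), add_halves]
  have := hρ x
  have := hρ y
  have := hρ z
  have hr₁ : 0 ≤ rhoZero α β (t - s) ‖x - z‖ := rhoZero_nonneg hts.le (norm_nonneg _)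
  calc heatKernelBound ρ α β (t - s) x z * heatKernelBound ρ α β s z y
      ≤ (√t * min 1 (ρ x ^ (α / 2) / √t) * ρ z ^ (α / 2) * rhoZero α β (t - s) ‖x - z‖)
        * (√t * min 1 (ρ y ^ (α / 2) / √t) * ρ z ^ (α / 2) * rhoZero α β s ‖z - y‖) :=
        mul_le_mul h₁ h₂ (heatKernelBound_nonneg hρ hs.le z y) (by positivity)
    _ = min 1 (ρ x ^ (α / 2) / √t) * min 1 (ρ y ^ (α / 2) / √t) * ρ z ^ α * (√t * √t)
        * (rhoZero α β (t - s) ‖x - z‖ * rhoZero α β s ‖z - y‖) := by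
        rw [← hρz]
        ring
    _ ≤ min 1 (ρ x ^ (α / 2) / √t) * min 1 (ρ y ^ (α / 2) / √t) * ρ z ^ α * (√t * √t)
        * (2 ^ β * rhoZero α β t ‖x - y‖
          * (rhoZero α β (t - s) ‖x - z‖ + rhoZero α β s ‖z - y‖)) := by
        gcongr
    _ = _ := by
        rw [heatKernelBound, rhoZero, Real.mul_self_sqrt ht.le]
        ring

end heatKernelBound

theorem stmt_4_general (d : ℕ) (α : ℝ) (hα : 1 < α ∧ α < 2) (T : ℝ)
    (D : Set (EuclideanSpace ℝ (Fin d)))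
    (pD : ℝ → EuclideanSpace ℝ (Fin d) → EuclideanSpace ℝ (Fin d) → ℝ)
    (C₁ : ℝ) (hC₁ : 1 < C₁)
    (hlow : ∀ t, 0 < t → t ≤ T → ∀ x ∈ D, ∀ y ∈ D,
      C₁⁻¹ * (min 1 ((infDist x Dᶜ) ^ (α/2) / Real.sqrt t)
        * min 1 ((infDist y Dᶜ) ^ (α/2) / Real.sqrt t)
        * (t / (‖x - y‖ + t ^ (1/α)) ^ ((d:ℝ) + α))) ≤ pD t x y)
    (hup : ∀ t, 0 < t → t ≤ T → ∀ x ∈ D, ∀ y ∈ D,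
      pD t x y ≤ C₁ * (min 1 ((infDist x Dᶜ) ^ (α/2) / Real.sqrt t)
        * min 1 ((infDist y Dᶜ) ^ (α/2) / Real.sqrt t)
        * (t / (‖x - y‖ + t ^ (1/α)) ^ ((d:ℝ) + α)))) :
    ∃ C > 0, ∀ (s t : ℝ), 0 < s → s < t → t ≤ T → ∀ x ∈ D, ∀ y ∈ D, ∀ z ∈ D,
      pD (t - s) x z * pD s z y / pD t x y
        ≤ C * (infDist z Dᶜ) ^ α *
            (1 / (‖x - z‖ + (t - s) ^ (1/α)) ^ ((d:ℝ) + α)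
              + 1 / (‖z - y‖ + s ^ (1/α)) ^ ((d:ℝ) + α)) := by
  have hC₁₀ : 0 < C₁ := one_pos.trans hC₁
  have hβ : 0 ≤ (d : ℝ) + α := by linarith [hα.1, (Nat.cast_nonneg d : (0 : ℝ) ≤ d)]
  have hρ : ∀ w, 0 ≤ infDist w Dᶜ := fun _ ↦ infDist_nonneg
  have hpD_nonneg : ∀ t, 0 < t → t ≤ T → ∀ x ∈ D, ∀ y ∈ D, 0 ≤ pD t x y :=
    fun t ht htT x hx y hy ↦ (mul_nonneg (inv_nonneg.2 hC₁₀.le)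
      (heatKernelBound_nonneg hρ ht.le x y)).trans (hlow t ht htT x hx y hy)
  refine ⟨C₁ ^ 3 * 2 ^ ((d : ℝ) + α), by positivity, ?_⟩
  intro s t hs hst htT x hx y hy z hz
  have hts : 0 < t - s := sub_pos.2 hst
  have hsT : s ≤ T := hst.le.trans htT
  have htsT : t - s ≤ T := (sub_le_self _ hs.le).trans htT
  have hK : 0 ≤ 2 ^ ((d : ℝ) + α) * infDist z Dᶜ ^ α
      * (rhoZero α (d + α) (t - s) ‖x - z‖ + rhoZero α (d + α) s ‖z - y‖) := by
    have := rhoZero_nonneg (α := α) (β := d + α) hts.le (norm_nonneg (x - z))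
    have := rhoZero_nonneg (α := α) (β := d + α) hs.le (norm_nonneg (z - y))
    have := hρ z
    positivity
  have key := mul_div_le_of_comparable hC₁₀ hK (heatKernelBound_nonneg hρ hts.le x z)
    (hpD_nonneg s hs hsT z hz y hy) (hpD_nonneg t (hs.trans hst) htT x hx y hy)
    (hup _ hts htsT x hx z hz) (hup _ hs hsT z hz y hy) (hlow t (hs.trans hst) htT x hx y hy)
    (heatKernelBound_mul_le hρ hα.1.le hβ hs hst x y z)
  simpa only [mul_assoc, rhoZero] using key

theorem stmt_4 (d : ℕ) (hd : 2 ≤ d) (α : ℝ) (hα : 1 < α ∧ α < 2) (T : ℝ) (hT : 0 < T)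
    (D : Set (EuclideanSpace ℝ (Fin d))) (hD : IsOpen D)
    (pD : ℝ → EuclideanSpace ℝ (Fin d) → EuclideanSpace ℝ (Fin d) → ℝ)
    (C₁ : ℝ) (hC₁ : 1 < C₁)
    (hlow : ∀ t, 0 < t → t ≤ T → ∀ x ∈ D, ∀ y ∈ D,
      C₁⁻¹ * (min 1 ((infDist x Dᶜ) ^ (α/2) / Real.sqrt t)
        * min 1 ((infDist y Dᶜ) ^ (α/2) / Real.sqrt t)
        * (t / (‖x - y‖ + t ^ (1/α)) ^ ((d:ℝ) + α))) ≤ pD t x y)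
    (hup : ∀ t, 0 < t → t ≤ T → ∀ x ∈ D, ∀ y ∈ D,
      pD t x y ≤ C₁ * (min 1 ((infDist x Dᶜ) ^ (α/2) / Real.sqrt t)
        * min 1 ((infDist y Dᶜ) ^ (α/2) / Real.sqrt t)
        * (t / (‖x - y‖ + t ^ (1/α)) ^ ((d:ℝ) + α)))) :
    ∃ C > 0, ∀ (s t : ℝ), 0 < s → s < t → t ≤ T → ∀ x ∈ D, ∀ y ∈ D, ∀ z ∈ D,
      pD (t - s) x z * pD s z y / pD t x y
        ≤ C * (infDist z Dᶜ) ^ α *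
            (1 / (‖x - z‖ + (t - s) ^ (1/α)) ^ ((d:ℝ) + α)
              + 1 / (‖z - y‖ + s ^ (1/α)) ^ ((d:ℝ) + α)) :=
  stmt_4_general d α hα T D pD C₁ hC₁ hlow hup
end

section
/- Let α ∈ (1,2), d ≥ 2. There exist constants c_1, c_2 > 0 such that for all positive ρ_y, ρ_z, r, t satisfying ρ_y ≤ ρ_z/2, ρ_z/2 ≤ r ≤ (t/2)^{1/α}: ∫_0^{t/2} s^{-1/α} min(1, ρ_y^{α/2}/√s) min(s^{-d/α}, s/r^{d+α}) ds is bounded above by c_1 · ( ρ_y^{α/2}/( √t · r^{d+1-α/2} · t^{-1/2} )) in the sense that, after multiplying by ρ_z^{α/2}/√t, the result is at most c_2 · ( ρ_z^{α/2} ρ_y^{α/2} / (√t · r^{d+1-α/2}) ). -/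
/-!
Bound `min 1 (c / √s) ≤ c / √s`. What remains is at most `(c / r ^ (d + α)) s ^ p` for
`s ≤ r ^ α` and `c s ^ q` beyond, with `p = 1/2 - 1/α > -1` and `q = -1/2 - (d + 1)/α < -1`,
so the integral over all of `(0, ∞)` is finite and can be computed piece by piece. At the
crossover point `s = r ^ α` both pieces are of order `c / r ^ (d + 1 - α/2)`.
-/

open MeasureTheory Set

section PowerDominated

variable {f : ℝ → ℝ} {a p q A B : ℝ}

theorem integrableOn_Ioi_of_le_rpow (hf : Measurable f) (ha : 0 < a) (hp : -1 < p)
    (hq : q < -1) (hf0 : ∀ s ∈ Ioi (0 : ℝ), 0 ≤ f s) (hfp : ∀ s ∈ Ioc 0 a, f s ≤ A * s ^ p)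
    (hfq : ∀ s ∈ Ioi a, f s ≤ B * s ^ q) : IntegrableOn f (Ioi 0) := by
  rw [← Ioc_union_Ioi_eq_Ioi ha.le, integrableOn_union]
  constructor
  · refine ((intervalIntegral.intervalIntegrable_rpow' hp).1.const_mul A).mono'
      hf.aestronglyMeasurable ((ae_restrict_iff' measurableSet_Ioc).mpr (.of_forall ?_))
    intro s hs
    rw [Real.norm_of_nonneg (hf0 s hs.1)]
    exact hfp s hs
  · refine ((integrableOn_Ioi_rpow_of_lt hq ha).const_mul B).mono'
      hf.aestronglyMeasurable ((ae_restrict_iff' measurableSet_Ioi).mpr (.of_forall ?_))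
    intro s hs
    rw [Real.norm_of_nonneg (hf0 s (ha.trans hs))]
    exact hfq s hs

theorem setIntegral_Ioi_le_of_le_rpow (hf : Measurable f) (ha : 0 < a) (hp : -1 < p)
    (hq : q < -1) (hf0 : ∀ s ∈ Ioi (0 : ℝ), 0 ≤ f s) (hfp : ∀ s ∈ Ioc 0 a, f s ≤ A * s ^ p)
    (hfq : ∀ s ∈ Ioi a, f s ≤ B * s ^ q) :
    ∫ s in Ioi 0, f s ≤ A * (a ^ (p + 1) / (p + 1)) + B * (-a ^ (q + 1) / (q + 1)) := by
  have hf_int := integrableOn_Ioi_of_le_rpow hf ha hp hq hf0 hfp hfq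
  rw [← Ioc_union_Ioi_eq_Ioi ha.le, setIntegral_union (Ioc_disjoint_Ioi le_rfl)
    measurableSet_Ioi (hf_int.mono_set Ioc_subset_Ioi_self)
    (hf_int.mono_set (Ioi_subset_Ioi ha.le))]
  have h_small : ∫ s in Ioc 0 a, A * s ^ p = A * (a ^ (p + 1) / (p + 1)) := by
    rw [integral_const_mul, ← intervalIntegral.integral_of_le ha.le,
      integral_rpow (Or.inl hp), Real.zero_rpow (by linarith), sub_zero]
  have h_large : ∫ s in Ioi a, B * s ^ q = B * (-a ^ (q + 1) / (q + 1)) := by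
    rw [integral_const_mul, integral_Ioi_rpow_of_lt hq ha]
  rw [← h_small, ← h_large]
  refine add_le_add ?_ ?_
  · exact setIntegral_mono_on (hf_int.mono_set Ioc_subset_Ioi_self)
      ((intervalIntegral.intervalIntegrable_rpow' hp).1.const_mul A) measurableSet_Ioc hfp
  · exact setIntegral_mono_on (hf_int.mono_set (Ioi_subset_Ioi ha.le))
      ((integrableOn_Ioi_rpow_of_lt hq ha).const_mul B) measurableSet_Ioi hfq

end PowerDominated

section MinBounds

variable {b g c R s : ℝ}

theorem rpow_mul_min_mul_min_le_left (hs : 0 < s) (hc : 0 ≤ c) (hR : 0 ≤ R) :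
    s ^ b * min 1 (c / Real.sqrt s) * min (s ^ g) (s / R) ≤ c / R * s ^ (b + 1 / 2) := by
  calc s ^ b * min 1 (c / Real.sqrt s) * min (s ^ g) (s / R)
      ≤ s ^ b * (c / Real.sqrt s) * (s / R) := by gcongr <;> exact min_le_right _ _
    _ = c / R * s ^ (b + 1 / 2) := by
      have hsqrt : 0 < Real.sqrt s := Real.sqrt_pos.mpr hs
      rw [Real.rpow_add hs, ← Real.sqrt_eq_rpow]
      field_simp
      rw [Real.sq_sqrt hs.le]

theorem rpow_mul_min_mul_min_le_right (hs : 0 < s) (hc : 0 ≤ c) (hR : 0 ≤ R) :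
    s ^ b * min 1 (c / Real.sqrt s) * min (s ^ g) (s / R) ≤ c * s ^ (b - 1 / 2 + g) := by
  calc s ^ b * min 1 (c / Real.sqrt s) * min (s ^ g) (s / R)
      ≤ s ^ b * (c / Real.sqrt s) * s ^ g := by
        gcongr
        exacts [min_le_right _ _, min_le_left _ _]
    _ = c * s ^ (b - 1 / 2 + g) := by
      rw [Real.rpow_add hs, Real.rpow_sub hs, ← Real.sqrt_eq_rpow]
      ring

end MinBounds

/-- `1 / (p + 1) - 1 / (q + 1)` for the exponents `p = 1/2 - 1/α` and `q = -1/2 - d/α - 1/α`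
of the two power regimes of the integrand. -/
noncomputable def kernelIntegralConst (d α : ℝ) : ℝ :=
  1 / (3 / 2 - 1 / α) + 1 / ((d + 1) / α - 1 / 2)

theorem kernelIntegralConst_pos {d α : ℝ} (hα : 2 / 3 < α) (hαd : α < 2 * (d + 1)) :
    0 < kernelIntegralConst d α := by
  have hα0 : 0 < α := by linarith
  have h₁ : 0 < 3 / 2 - 1 / α := by
    rw [sub_pos, div_lt_iff₀ hα0]; linarith
  have h₂ : 0 < (d + 1) / α - 1 / 2 := by
    rw [sub_pos, lt_div_iff₀ hα0]; linarith
  unfold kernelIntegralConst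
  positivity

theorem rpow_bounds_eq_kernelIntegralConst_mul {d α c r : ℝ} (hα : 0 < α) (hr : 0 < r) :
    c / r ^ (d + α) * ((r ^ α) ^ (-(1 / α) + 1 / 2 + 1) / (-(1 / α) + 1 / 2 + 1))
      + c * (-(r ^ α) ^ (-(1 / α) - 1 / 2 + -d / α + 1) / (-(1 / α) - 1 / 2 + -d / α + 1))
      = kernelIntegralConst d α * (c / r ^ (d + 1 - α / 2)) := by
  have hp : (r ^ α) ^ (-(1 / α) + 1 / 2 + 1) = r ^ (-(d + 1 - α / 2)) * r ^ (d + α) := by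
    rw [← Real.rpow_mul hr.le, ← Real.rpow_add hr]
    congr 1
    field_simp
    ring
  have hq1 : -(1 / α) - 1 / 2 + -d / α + 1 = -((d + 1) / α - 1 / 2) := by ring
  have hq : (r ^ α) ^ (-((d + 1) / α - 1 / 2)) = r ^ (-(d + 1 - α / 2)) := by
    rw [← Real.rpow_mul hr.le]
    congr 1
    field_simp
  have hR : 0 < r ^ (d + α) := Real.rpow_pos_of_pos hr _
  rw [hq1, hp, hq, neg_div_neg_eq, Real.rpow_neg hr.le, kernelIntegralConst]
  field_simp
  ring

theorem setIntegral_Ioo_rpow_mul_min_mul_min_le {d α c r T : ℝ} (hα : 2 / 3 < α)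
    (hαd : α < 2 * (d + 1)) (hc : 0 ≤ c) (hr : 0 < r) :
    ∫ s in Ioo 0 T,
        s ^ (-(1 / α)) * min 1 (c / Real.sqrt s) * min (s ^ (-d / α)) (s / r ^ (d + α))
      ≤ kernelIntegralConst d α * (c / r ^ (d + 1 - α / 2)) := by
  have hα0 : 0 < α := by linarith
  have hp : -1 < -(1 / α) + 1 / 2 := by
    have : 1 / α < 3 / 2 := by rw [div_lt_iff₀ hα0]; linarith
    linarith
  have hq : -(1 / α) - 1 / 2 + -d / α < -1 := by
    have : 1 / 2 < (d + 1) / α := by rw [lt_div_iff₀ hα0]; linarith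
    have hsplit : (d + 1) / α = d / α + 1 / α := by ring
    rw [neg_div]
    linarith
  have ha : 0 < r ^ α := Real.rpow_pos_of_pos hr α
  have hR : 0 ≤ r ^ (d + α) := by positivity
  have hf : Measurable fun s : ℝ =>
      s ^ (-(1 / α)) * min 1 (c / Real.sqrt s) * min (s ^ (-d / α)) (s / r ^ (d + α)) := by
    fun_prop
  have hf0 : ∀ s ∈ Ioi (0 : ℝ),
      0 ≤ s ^ (-(1 / α)) * min 1 (c / Real.sqrt s) * min (s ^ (-d / α)) (s / r ^ (d + α)) := by
    intro s (hs : 0 < s)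
    positivity
  have hfp := fun s (hs : s ∈ Ioc 0 (r ^ α)) =>
    rpow_mul_min_mul_min_le_left (b := -(1 / α)) (g := -d / α) hs.1 hc hR
  have hfq := fun s (hs : s ∈ Ioi (r ^ α)) =>
    rpow_mul_min_mul_min_le_right (b := -(1 / α)) (g := -d / α) (ha.trans hs) hc hR
  calc _ ≤ ∫ s in Ioi 0, s ^ (-(1 / α)) * min 1 (c / Real.sqrt s)
          * min (s ^ (-d / α)) (s / r ^ (d + α)) :=
        setIntegral_mono_set (integrableOn_Ioi_of_le_rpow hf ha hp hq hf0 hfp hfq)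
          ((ae_restrict_iff' measurableSet_Ioi).mpr (.of_forall hf0))
          Ioo_subset_Ioi_self.eventuallyLE
    _ ≤ _ := setIntegral_Ioi_le_of_le_rpow hf ha hp hq hf0 hfp hfq
    _ = _ := rpow_bounds_eq_kernelIntegralConst_mul hα0 hr

theorem stmt_7_general (d : ℕ) (α : ℝ) (hα : 1 < α ∧ α < 2) :
    ∃ c₁ > 0, ∃ c₂ > 0, ∀ (ρy ρz r t : ℝ),
      0 < ρy → 0 < ρz → 0 < r → 0 < t →
      ρy ≤ ρz / 2 → ρz / 2 ≤ r → r ≤ (t/2) ^ (1/α) →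
      (∫ s in Ioo (0:ℝ) (t/2),
          s ^ (-(1/α)) * min 1 (ρy ^ (α/2) / Real.sqrt s)
            * min (s ^ (-(d:ℝ)/α)) (s / r ^ ((d:ℝ) + α)))
        ≤ c₁ * (ρy ^ (α/2) / r ^ ((d:ℝ) + 1 - α/2))
      ∧ (ρz ^ (α/2) / Real.sqrt t) *
          (∫ s in Ioo (0:ℝ) (t/2),
            s ^ (-(1/α)) * min 1 (ρy ^ (α/2) / Real.sqrt s)
              * min (s ^ (-(d:ℝ)/α)) (s / r ^ ((d:ℝ) + α)))
        ≤ c₂ * (ρz ^ (α/2) * ρy ^ (α/2) / (Real.sqrt t * r ^ ((d:ℝ) + 1 - α/2))) := by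
  have hα' : 2 / 3 < α := by linarith
  have hαd : α < 2 * ((d : ℝ) + 1) := by linarith [d.cast_nonneg (α := ℝ)]
  have hC := kernelIntegralConst_pos hα' hαd
  refine ⟨_, hC, _, hC, fun ρy ρz r t hρy _ hr _ _ _ _ => ?_⟩
  have hI := setIntegral_Ioo_rpow_mul_min_mul_min_le (T := t / 2) hα' hαd
    (Real.rpow_nonneg hρy.le (α / 2)) hr
  refine ⟨hI, ?_⟩
  calc _ ≤ ρz ^ (α / 2) / Real.sqrt t
        * (kernelIntegralConst d α * (ρy ^ (α / 2) / r ^ ((d : ℝ) + 1 - α / 2))) := by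
        gcongr
    _ = _ := by ring

theorem stmt_7 (d : ℕ) (hd : 2 ≤ d) (α : ℝ) (hα : 1 < α ∧ α < 2) :
    ∃ c₁ > 0, ∃ c₂ > 0, ∀ (ρy ρz r t : ℝ),
      0 < ρy → 0 < ρz → 0 < r → 0 < t →
      ρy ≤ ρz / 2 → ρz / 2 ≤ r → r ≤ (t/2) ^ (1/α) →
      (∫ s in Ioo (0:ℝ) (t/2),
          s ^ (-(1/α)) * min 1 (ρy ^ (α/2) / Real.sqrt s)
            * min (s ^ (-(d:ℝ)/α)) (s / r ^ ((d:ℝ) + α)))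
        ≤ c₁ * (ρy ^ (α/2) / r ^ ((d:ℝ) + 1 - α/2))
      ∧ (ρz ^ (α/2) / Real.sqrt t) *
          (∫ s in Ioo (0:ℝ) (t/2),
            s ^ (-(1/α)) * min 1 (ρy ^ (α/2) / Real.sqrt s)
              * min (s ^ (-(d:ℝ)/α)) (s / r ^ ((d:ℝ) + α)))
        ≤ c₂ * (ρz ^ (α/2) * ρy ^ (α/2) / (Real.sqrt t * r ^ ((d:ℝ) + 1 - α/2))) :=
  stmt_7_general d α hα
end

section
/- Let α ∈ (1,2), d ≥ 1, and define ϱ^0(u,w) := 1/(|w| + u^{1/α})^{d+α} for u > 0, w ∈ ℝ^d. Then for every t > 0 and w ≠ 0: ∫_0^t s^{1-1/α} ϱ^0(s,w) ds ≤ C · min( |w|^{-(d+1-α)}, t^{2-1/α} |w|^{-(d+α)} ) for a constant C depending only on d and α. -/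
/-!
With `r = ‖w‖` and `β = d + α`, the integrand `s ^ (1 - 1/α) * (r + s ^ (1/α)) ^ (-β)` is at most
`s ^ (1 - 1/α) * r ^ (-β)` (drop `s ^ (1/α)` from the base) and at most `s ^ ((α - 1 - β) / α)`
(drop `r`). Integrating the first majorant over `(0, t)` gives the bound `t ^ (2 - 1/α) * r ^ (-β)`.
The two majorants cross at `s = r ^ α`; using the first below and the second above that point
bounds the integral over all of `(0, ∞)` by a multiple of `r ^ (2α - 1 - β) = ‖w‖ ^ (-(d + 1 - α))`,
the tail being integrable because `β > 2α - 1`.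
-/

open MeasureTheory Set Real

noncomputable def timeKernel (α β r s : ℝ) : ℝ := s ^ (1 - 1/α) * (1 / (r + s ^ (1/α)) ^ β)

section
variable {α β r : ℝ}

lemma timeKernel_nonneg (hr : 0 ≤ r) {s : ℝ} (hs : 0 ≤ s) : 0 ≤ timeKernel α β r s := by
  unfold timeKernel; positivity

lemma measurable_timeKernel : Measurable (timeKernel α β r) := by
  unfold timeKernel; fun_prop

lemma timeKernel_le_rpow_mul (hβ : 0 ≤ β) (hr : 0 < r) {s : ℝ} (hs : 0 ≤ s) :
    timeKernel α β r s ≤ s ^ (1 - 1/α) * r ^ (-β) := by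
  rw [timeKernel, rpow_neg hr.le, ← one_div]
  have : 0 ≤ s ^ (1/α) := rpow_nonneg hs _
  gcongr
  linarith

lemma timeKernel_le_rpow (hα : 0 < α) (hβ : 0 ≤ β) (hr : 0 ≤ r) {s : ℝ} (hs : 0 < s) :
    timeKernel α β r s ≤ s ^ ((α - 1 - β) / α) :=
  calc timeKernel α β r s ≤ s ^ (1 - 1/α) * (1 / (s ^ (1/α)) ^ β) := by
        have : 0 < s ^ (1/α) := rpow_pos_of_pos hs _
        unfold timeKernel; gcongr; linarith
    _ = s ^ ((α - 1 - β) / α) := by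
        rw [← rpow_mul hs.le, one_div (s ^ _), ← rpow_neg hs.le, ← rpow_add hs]
        congr 1; field_simp; ring

lemma integrableOn_timeKernel_and_setIntegral_le {S : Set ℝ} (hS : MeasurableSet S)
    (hS0 : S ⊆ Ioi 0) (hr : 0 ≤ r) {g : ℝ → ℝ} (hg : IntegrableOn g S)
    (hle : ∀ s ∈ S, timeKernel α β r s ≤ g s) :
    IntegrableOn (timeKernel α β r) S ∧ ∫ s in S, timeKernel α β r s ≤ ∫ s in S, g s := by
  have hnonneg : ∀ᵐ s ∂volume.restrict S, 0 ≤ timeKernel α β r s := by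
    filter_upwards [ae_restrict_mem hS] with s hs using timeKernel_nonneg hr (hS0 hs).le
  have hle' : ∀ᵐ s ∂volume.restrict S, timeKernel α β r s ≤ g s := by
    filter_upwards [ae_restrict_mem hS] with s hs using hle s hs
  refine ⟨hg.mono' measurable_timeKernel.aestronglyMeasurable ?_,
    integral_mono_of_nonneg hnonneg hg hle'⟩
  filter_upwards [hnonneg, hle'] with s h0 h1
  rwa [norm_of_nonneg h0]

lemma neg_one_lt_one_sub_one_div (hα : 1/2 < α) : -1 < 1 - 1/α := by
  have : 1/α < 2 := (div_lt_iff₀ (by linarith)).2 (by linarith)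
  linarith

lemma integrableOn_timeKernel_and_setIntegral_Ioc_le (hα : 1/2 < α) (hβ : 0 ≤ β) (hr : 0 < r)
    {t : ℝ} (ht : 0 ≤ t) :
    IntegrableOn (timeKernel α β r) (Ioc 0 t) ∧
      ∫ s in Ioc 0 t, timeKernel α β r s ≤ (2 - 1/α)⁻¹ * t ^ (2 - 1/α) * r ^ (-β) := by
  have hp := neg_one_lt_one_sub_one_div hα
  obtain ⟨hint, hle⟩ := integrableOn_timeKernel_and_setIntegral_le measurableSet_Ioc
    Ioc_subset_Ioi_self hr.le ((intervalIntegral.intervalIntegrable_rpow' hp).1.mul_const _)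
    fun _ hs => timeKernel_le_rpow_mul hβ hr hs.1.le
  refine ⟨hint, hle.trans_eq ?_⟩
  rw [integral_mul_const, ← intervalIntegral.integral_of_le ht, integral_rpow (.inl hp),
    zero_rpow (by linarith), show 1 - 1/α + 1 = 2 - 1/α by ring]
  ring

lemma integrableOn_timeKernel_and_setIntegral_Ioi_le (hα : 1/2 < α) (hβ : 2 * α - 1 < β)
    (hr : 0 ≤ r) {m : ℝ} (hm : 0 < m) :
    IntegrableOn (timeKernel α β r) (Ioi m) ∧
      ∫ s in Ioi m, timeKernel α β r s ≤ α / (β + 1 - 2 * α) * m ^ ((2 * α - 1 - β) / α) := by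
  have hα0 : 0 < α := by linarith
  have hq : (α - 1 - β) / α < -1 := by rw [div_lt_iff₀ hα0]; linarith
  obtain ⟨hint, hle⟩ := integrableOn_timeKernel_and_setIntegral_le measurableSet_Ioi
    (Ioi_subset_Ioi hm.le) hr (integrableOn_Ioi_rpow_of_lt hq hm)
    fun _ hs => timeKernel_le_rpow hα0 (by linarith) hr (hm.trans hs)
  refine ⟨hint, hle.trans_eq ?_⟩
  have hne : 2 * α - 1 - β ≠ 0 := by linarith
  have hne' : β + 1 - 2 * α ≠ 0 := by linarith
  rw [integral_Ioi_rpow_of_lt hq hm, show (α - 1 - β) / α + 1 = (2 * α - 1 - β) / α by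
    field_simp; ring]
  field_simp
  ring

lemma integrableOn_timeKernel_and_setIntegral_Ioi_zero_le (hα : 1/2 < α) (hβ : 2 * α - 1 < β)
    (hr : 0 < r) :
    IntegrableOn (timeKernel α β r) (Ioi 0) ∧
      ∫ s in Ioi 0, timeKernel α β r s
        ≤ ((2 - 1/α)⁻¹ + α / (β + 1 - 2 * α)) * r ^ (2 * α - 1 - β) := by
  have hm : 0 < r ^ α := rpow_pos_of_pos hr α
  obtain ⟨hint₁, hle₁⟩ :=
    integrableOn_timeKernel_and_setIntegral_Ioc_le (β := β) hα (by linarith) hr hm.le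
  obtain ⟨hint₂, hle₂⟩ := integrableOn_timeKernel_and_setIntegral_Ioi_le hα hβ hr.le hm
  rw [← Ioc_union_Ioi_eq_Ioi hm.le]
  refine ⟨hint₁.union hint₂, ?_⟩
  rw [setIntegral_union Ioc_disjoint_Ioi_same measurableSet_Ioi hint₁ hint₂]
  have e₁ : (r ^ α) ^ (2 - 1/α) * r ^ (-β) = r ^ (2 * α - 1 - β) := by
    rw [← rpow_mul hr.le, ← rpow_add hr]; congr 1; field_simp; ring
  have e₂ : (r ^ α) ^ ((2 * α - 1 - β) / α) = r ^ (2 * α - 1 - β) := by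
    rw [← rpow_mul hr.le]; congr 1; field_simp
  rw [mul_assoc, e₁] at hle₁
  rw [e₂] at hle₂
  linarith

end

theorem stmt_8 (d : ℕ) (hd : 1 ≤ d) (α : ℝ) (hα : 1 < α ∧ α < 2) :
    ∃ C > 0, ∀ (t : ℝ), 0 < t → ∀ w : EuclideanSpace ℝ (Fin d), w ≠ 0 →
      ∫ s in Ioo (0:ℝ) t, s ^ (1 - 1/α) * (1 / (‖w‖ + s ^ (1/α)) ^ ((d:ℝ) + α))
        ≤ C * min (‖w‖ ^ (-((d:ℝ) + 1 - α))) (t ^ (2 - 1/α) * ‖w‖ ^ (-((d:ℝ) + α))) := by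
  obtain ⟨hα1, hα2⟩ := hα
  have hd1 : (1:ℝ) ≤ d := by exact_mod_cast hd
  have hα₀ : 1/2 < α := by linarith
  have hβ : 2 * α - 1 < d + α := by linarith
  have hC₁ : 0 < (2 - 1/α)⁻¹ := inv_pos.2 (by linarith [neg_one_lt_one_sub_one_div hα₀])
  have hC₂ : 0 < α / (d + α + 1 - 2 * α) := div_pos (by linarith) (by linarith)
  refine ⟨_, add_pos hC₁ hC₂, fun t ht w hw => ?_⟩
  have hr : 0 < ‖w‖ := norm_pos_iff.2 hw
  obtain ⟨hint, hfar⟩ := integrableOn_timeKernel_and_setIntegral_Ioi_zero_le hα₀ hβ hr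
  have hnear :=
    (integrableOn_timeKernel_and_setIntegral_Ioc_le (β := d + α) hα₀ (by linarith) hr ht.le).2
  rw [mul_min_of_nonneg _ _ (add_pos hC₁ hC₂).le,
    show -((d:ℝ) + 1 - α) = 2 * α - 1 - (d + α) by ring]
  change ∫ s in Ioo 0 t, timeKernel α (d + α) ‖w‖ s ≤ _
  refine le_min ?_ ?_
  · refine (setIntegral_mono_set hint ?_ Ioo_subset_Ioi_self.eventuallyLE).trans hfar
    filter_upwards [ae_restrict_mem measurableSet_Ioi] with s hs
    exact timeKernel_nonneg hr.le (le_of_lt hs)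
  · rw [← integral_Ioc_eq_integral_Ioo]
    refine hnear.trans ?_
    rw [mul_assoc]
    gcongr
    exact le_add_of_nonneg_right hC₂.le
end

section
/- Let d ≥ 2, α ∈ (1,2), r = |x-z| > 0, t > 0, and let ϱ^1(u,w) = u/(|w|+u^{1/α})^{d+α}. Then r^{1-α/2} ∫_{t/2}^t (t-s)^{1/2-2/α} ϱ^1(t-s,x-z) ds ≤ C min( r^{-(d+1-α)}, t^{2-2/α} r^{-(d+α-1)} ), where C = C(d,α) > 0. -/
open MeasureTheory Set intervalIntegral

private lemma denom_bound {α r u a b : ℝ} (hr : 0 < r) (hu : 0 < u)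
    (ha : 0 ≤ a) (hb : 0 ≤ b) :
    r ^ a * u ^ (b / α) ≤ (r + u ^ (1/α)) ^ (a + b) := by
  have hs : (0:ℝ) < u ^ (1/α) := Real.rpow_pos_of_pos hu _
  have h1 : u ^ (b/α) = (u ^ (1/α)) ^ b := by
    rw [← Real.rpow_mul hu.le]; congr 1; ring
  rw [h1, Real.rpow_add (by linarith : (0:ℝ) < r + u^(1/α))]
  exact mul_le_mul (Real.rpow_le_rpow hr.le (by linarith) ha)
    (Real.rpow_le_rpow hs.le (by linarith) hb) (Real.rpow_nonneg hs.le b)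
    (Real.rpow_nonneg (by linarith) a)

private lemma point_bound {α r u a b : ℝ} (hr : 0 < r) (hu : 0 < u)
    (ha : 0 ≤ a) (hb : 0 ≤ b) :
    u ^ ((1:ℝ)/2 - 2/α) * (u / (r + u ^ (1/α)) ^ (a + b))
      ≤ u ^ ((3:ℝ)/2 - 2/α - b/α) * r ^ (-a) := by
  have hs : (0:ℝ) < r + u ^ (1/α) := by
    have := Real.rpow_pos_of_pos hu (1/α); linarith
  have hden : (0:ℝ) < r ^ a * u ^ (b/α) := by positivity
  calc u ^ ((1:ℝ)/2 - 2/α) * (u / (r + u ^ (1/α)) ^ (a + b))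
      ≤ u ^ ((1:ℝ)/2 - 2/α) * (u / (r ^ a * u ^ (b/α))) := by
        have h2 : u / (r + u ^ (1/α)) ^ (a + b) ≤ u / (r ^ a * u ^ (b/α)) :=
          div_le_div_of_nonneg_left hu.le hden (denom_bound hr hu ha hb)
        exact mul_le_mul_of_nonneg_left h2 (Real.rpow_nonneg hu.le _)
    _ = u ^ ((3:ℝ)/2 - 2/α - b/α) * r ^ (-a) := by
        rw [show (3:ℝ)/2 - 2/α - b/α = ((1:ℝ)/2 - 2/α) + 1 + (-(b/α)) by ring,
          Real.rpow_add hu, Real.rpow_add hu, Real.rpow_one, Real.rpow_neg hu.le,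
          Real.rpow_neg hr.le]
        field_simp

private lemma G_intble {α r e : ℝ} (hα1 : 1 < α) (hr : 0 < r) (he : 0 ≤ e) {T : ℝ} (hT : 0 < T) :
    IntervalIntegrable (fun u : ℝ => u ^ ((1:ℝ)/2 - 2/α) * (u / (r + u ^ (1/α)) ^ e))
      volume 0 T := by
  have hα0 : 0 < α := by linarith
  have h2α : 2/α < 2 := by rw [div_lt_iff₀ hα0]; nlinarith
  have hmaj : IntervalIntegrable (fun u : ℝ => u ^ ((3:ℝ)/2 - 2/α) * r ^ (-e)) volume 0 T :=
    (intervalIntegral.intervalIntegrable_rpow' (by linarith)).mul_const _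
  refine hmaj.mono_fun ?_ ?_
  · apply Measurable.aestronglyMeasurable
    fun_prop
  · rw [uIoc_of_le hT.le]
    filter_upwards [ae_restrict_mem measurableSet_Ioc] with u hu
    have hu0 : 0 < u := hu.1
    have hnn : 0 ≤ u ^ ((1:ℝ)/2 - 2/α) * (u / (r + u ^ (1/α)) ^ e) := by
      have h1 : (0:ℝ) < r + u ^ (1/α) := by
        have := Real.rpow_pos_of_pos hu0 (1/α); linarith
      positivity
    have hnn2 : 0 ≤ u ^ ((3:ℝ)/2 - 2/α) * r ^ (-e) := by positivity
    rw [Real.norm_of_nonneg hnn, Real.norm_of_nonneg hnn2]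
    have := point_bound (α := α) hr hu0 he le_rfl (b := 0)
    simpa using this

private lemma integral_G_le {α r e a b S : ℝ} (hα1 : 1 < α) (hα2 : α < 2) (hr : 0 < r)
    (ha : 0 ≤ a) (hb : 0 ≤ b) (he : e = a + b) (hS : 0 < S)
    (hp : -1 < (3:ℝ)/2 - 2/α - b/α) :
    ∫ u in (0:ℝ)..S, u ^ ((1:ℝ)/2 - 2/α) * (u / (r + u ^ (1/α)) ^ e)
      ≤ S ^ ((3:ℝ)/2 - 2/α - b/α + 1) / ((3:ℝ)/2 - 2/α - b/α + 1) * r ^ (-a) := by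
  have he0 : 0 ≤ e := by rw [he]; linarith
  have hint := G_intble (r := r) hα1 hr he0 hS
  have hmaj : IntervalIntegrable (fun u : ℝ => u ^ ((3:ℝ)/2 - 2/α - b/α) * r ^ (-a))
      volume 0 S := (intervalIntegral.intervalIntegrable_rpow' hp).mul_const _
  have hmono := intervalIntegral.integral_mono_on hS.le hint hmaj (fun u hu => by
    rcases eq_or_lt_of_le hu.1 with h0 | h0
    · subst he
      rw [← h0]
      have : (0:ℝ) ^ ((1:ℝ)/2 - 2/α) = 0 := by
        apply Real.zero_rpow
        have hα0 : 0 < α := by linarith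
        have h2α : 1 < 2/α := by rw [lt_div_iff₀ hα0]; linarith
        intro h; linarith
      rw [this, zero_mul]
      positivity
    · subst he; exact point_bound hr h0 ha hb)
  calc ∫ u in (0:ℝ)..S, u ^ ((1:ℝ)/2 - 2/α) * (u / (r + u ^ (1/α)) ^ e)
      ≤ ∫ u in (0:ℝ)..S, u ^ ((3:ℝ)/2 - 2/α - b/α) * r ^ (-a) := hmono
    _ = (∫ u in (0:ℝ)..S, u ^ ((3:ℝ)/2 - 2/α - b/α)) * r ^ (-a) :=
        intervalIntegral.integral_mul_const _ _
    _ = S ^ ((3:ℝ)/2 - 2/α - b/α + 1) / ((3:ℝ)/2 - 2/α - b/α + 1) * r ^ (-a) := by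
        rw [integral_rpow (Or.inl hp)]
        rw [Real.zero_rpow (by linarith : (3:ℝ)/2 - 2/α - b/α + 1 ≠ 0)]
        ring

private lemma integral_G_tail {α r S T : ℝ} (d : ℕ) (hα1 : 1 < α) (hα2 : α < 2)
    (hd : 2 ≤ d) (hr : 0 < r) (hS : 0 < S) (hST : S ≤ T) :
    ∫ u in S..T, u ^ ((1:ℝ)/2 - 2/α) * (u / (r + u ^ (1/α)) ^ ((d:ℝ)+α))
      ≤ S ^ ((3:ℝ)/2 - 2/α - ((d:ℝ)+α)/α + 1)
          / (-((3:ℝ)/2 - 2/α - ((d:ℝ)+α)/α + 1)) := by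
  have hα0 : 0 < α := by linarith
  have hd2 : (2:ℝ) ≤ (d:ℝ) := by exact_mod_cast hd
  set q : ℝ := (3:ℝ)/2 - 2/α - ((d:ℝ)+α)/α with hqdef
  have hq : q + 1 < 0 := by
    have h5 : (5:ℝ)/2 * α < (d:ℝ) + α + 2 := by nlinarith
    have : q + 1 = 5/2 - ((d:ℝ)+α+2)/α := by rw [hqdef]; ring
    rw [this]
    rw [sub_neg, lt_div_iff₀ hα0]
    linarith
  have hT0 : 0 < T := lt_of_lt_of_le hS hST
  have hde : (0:ℝ) ≤ (d:ℝ) + α := by linarith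
  have hint : IntervalIntegrable
      (fun u : ℝ => u ^ ((1:ℝ)/2 - 2/α) * (u / (r + u ^ (1/α)) ^ ((d:ℝ)+α))) volume S T := by
    apply (G_intble (r := r) hα1 hr hde hT0).mono_set
    rw [uIcc_of_le hST, uIcc_of_le hT0.le]
    exact Icc_subset_Icc hS.le le_rfl
  have hmaj : IntervalIntegrable (fun u : ℝ => u ^ q) volume S T := by
    apply ContinuousOn.intervalIntegrable
    intro u hu
    rw [uIcc_of_le hST] at hu
    exact (Real.continuousAt_rpow_const u q
      (Or.inl (lt_of_lt_of_le hS hu.1).ne')).continuousWithinAt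
  have hmono := intervalIntegral.integral_mono_on hST hint hmaj (fun u hu => by
    have hu0 : 0 < u := lt_of_lt_of_le hS hu.1
    have := point_bound (α := α) (a := 0) hr hu0 le_rfl hde
    simpa [hqdef] using this)
  have hq1 : q ≠ -1 := by intro h; rw [h] at hq; norm_num at hq
  have h0ni : (0:ℝ) ∉ Set.uIcc S T := by
    rw [uIcc_of_le hST]
    intro h
    exact absurd h.1 (by linarith)
  have hTq : 0 ≤ T ^ (q+1) := Real.rpow_nonneg hT0.le _
  calc ∫ u in S..T, u ^ ((1:ℝ)/2 - 2/α) * (u / (r + u ^ (1/α)) ^ ((d:ℝ)+α))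
      ≤ ∫ u in S..T, u ^ q := hmono
    _ = (T ^ (q+1) - S ^ (q+1)) / (q+1) := integral_rpow (Or.inr ⟨hq1, h0ni⟩)
    _ ≤ S ^ (q+1) / (-(q+1)) := by
        have hc : q + 1 ≠ 0 := by linarith
        have hgen : ∀ A B c : ℝ, c ≠ 0 → A / (-c) - (B - A) / c = B / (-c) := by
          intro A B c hc0
          rw [div_neg, div_neg, sub_div]
          ring
        have hkey := hgen (S ^ (q+1)) (T ^ (q+1)) (q+1) hc
        have h2 : 0 ≤ T ^ (q+1) / (-(q+1)) := div_nonneg hTq (by linarith)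
        linarith
set_option maxHeartbeats 2000000 in
theorem stmt_17 (d : ℕ) (hd : 2 ≤ d) (α : ℝ) (hα : 1 < α ∧ α < 2) :
    ∃ C > 0, ∀ (t : ℝ), 0 < t → ∀ x z : EuclideanSpace ℝ (Fin d), x ≠ z →
      ‖x - z‖ ^ (1 - α/2) *
        ∫ s in Ioo (t/2) t,
          (t - s) ^ ((1:ℝ)/2 - 2/α)
            * ((t - s) / (‖x - z‖ + (t - s) ^ (1/α)) ^ ((d:ℝ) + α))
        ≤ C * min (‖x - z‖ ^ (-((d:ℝ) + 1 - α)))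
              (t ^ (2 - 2/α) * ‖x - z‖ ^ (-((d:ℝ) + α - 1))) := by
  obtain ⟨hα1, hα2⟩ := hα
  have hα0 : 0 < α := by linarith
  have hd2 : (2:ℝ) ≤ (d:ℝ) := by exact_mod_cast hd
  have h2α : 2/α < 2 := by rw [div_lt_iff₀ hα0]; nlinarith
  have h2α' : 1 < 2/α := by rw [lt_div_iff₀ hα0]; linarith
  have hc1 : 0 < (5:ℝ)/2 - 2/α := by linarith
  have hc2 : 0 < 2 - 2/α := by linarith
  set q1 : ℝ := (3:ℝ)/2 - 2/α - ((d:ℝ)+α)/α + 1 with hq1def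
  clear_value q1
  have hqneg : q1 < 0 := by
    have h5 : (5:ℝ)/2 * α < (d:ℝ) + α + 2 := by nlinarith
    have heq : q1 = 5/2 - ((d:ℝ)+α+2)/α := by rw [hq1def]; ring
    rw [heq, sub_neg, lt_div_iff₀ hα0]; linarith
  have hC1 : 0 < 1/((5:ℝ)/2 - 2/α) := one_div_pos.2 hc1
  have hC2 : 0 < 1/(-q1) := one_div_pos.2 (by linarith)
  have hC3 : 0 < 1/(2 - 2/α) := one_div_pos.2 hc2
  refine ⟨1/((5:ℝ)/2 - 2/α) + 1/(-q1) + 1/(2 - 2/α), by linarith, ?_⟩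
  intro t ht x z hxz
  have hr : 0 < ‖x - z‖ := by
    rw [norm_pos_iff]; exact sub_ne_zero.mpr hxz
  set r := ‖x - z‖ with hrdef
  clear_value r
  have hT : 0 < t/2 := by linarith
  have hEq : (∫ s in Ioo (t/2) t, (t - s) ^ ((1:ℝ)/2 - 2/α)
        * ((t - s) / (r + (t - s) ^ (1/α)) ^ ((d:ℝ) + α)))
      = ∫ u in (0:ℝ)..(t/2), u ^ ((1:ℝ)/2 - 2/α)
          * (u / (r + u ^ (1/α)) ^ ((d:ℝ) + α)) := by
    rw [← integral_Ioc_eq_integral_Ioo,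
      ← intervalIntegral.integral_of_le (by linarith : t/2 ≤ t)]
    have hcomp := intervalIntegral.integral_comp_sub_left (a := t/2) (b := t)
      (fun u : ℝ => u ^ ((1:ℝ)/2 - 2/α) * (u / (r + u ^ (1/α)) ^ ((d:ℝ) + α))) t
    rw [show t - t = (0:ℝ) by ring, show t - t/2 = t/2 by ring] at hcomp
    exact hcomp
  rw [hEq]
  set J := ∫ u in (0:ℝ)..(t/2), u ^ ((1:ℝ)/2 - 2/α)
      * (u / (r + u ^ (1/α)) ^ ((d:ℝ) + α)) with hJdef
  clear_value J
  -- Bound B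
  have h12 : (α/2)/α = (1:ℝ)/2 := by
    field_simp
  have hBle : J ≤ (t/2) ^ (2 - 2/α) / (2 - 2/α) * r ^ (-((d:ℝ) + α/2)) := by
    have hkey := integral_G_le (e := (d:ℝ)+α) (a := (d:ℝ)+α/2) (b := α/2)
      hα1 hα2 hr (by linarith) (by linarith) (by ring) hT (by rw [h12]; linarith)
    rw [h12, show (3:ℝ)/2 - 2/α - 1/2 + 1 = 2 - 2/α by ring, ← hJdef] at hkey
    exact hkey
  have hB : r ^ (1 - α/2) * J ≤ (1/(2-2/α)) * (t ^ (2-2/α) * r ^ (-((d:ℝ) + α - 1))) := by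
    have h2 : r ^ (1-α/2) * r ^ (-((d:ℝ)+α/2)) = r ^ (-((d:ℝ)+α-1)) := by
      rw [← Real.rpow_add hr]; congr 1; ring
    have h3 : (t/2) ^ (2-2/α) ≤ t ^ (2-2/α) :=
      Real.rpow_le_rpow (by linarith) (by linarith) (by linarith)
    calc r ^ (1-α/2) * J
        ≤ r ^ (1-α/2) * ((t/2) ^ (2-2/α)/(2-2/α) * r ^ (-((d:ℝ)+α/2))) :=
          mul_le_mul_of_nonneg_left hBle (Real.rpow_nonneg hr.le _)
      _ = (t/2) ^ (2-2/α)/(2-2/α) * (r ^ (1-α/2) * r ^ (-((d:ℝ)+α/2))) := by ring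
      _ = (t/2) ^ (2-2/α)/(2-2/α) * r ^ (-((d:ℝ)+α-1)) := by rw [h2]
      _ ≤ t ^ (2-2/α)/(2-2/α) * r ^ (-((d:ℝ)+α-1)) := by
          have := Real.rpow_nonneg hr.le (-((d:ℝ)+α-1))
          gcongr
      _ = (1/(2-2/α)) * (t ^ (2-2/α) * r ^ (-((d:ℝ)+α-1))) := by ring
  -- Bound A
  have hrα : 0 < r ^ α := Real.rpow_pos_of_pos hr α
  have hde : (0:ℝ) ≤ (d:ℝ) + α := by linarith
  have h0α : (0:ℝ)/α = 0 := zero_div α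
  have hmain : ∀ S : ℝ, 0 < S →
      (∫ u in (0:ℝ)..S, u ^ ((1:ℝ)/2-2/α) * (u / (r + u^(1/α)) ^ ((d:ℝ)+α)))
        ≤ S ^ ((5:ℝ)/2 - 2/α) / ((5:ℝ)/2-2/α) * r ^ (-((d:ℝ)+α)) := by
    intro S hS
    have hkey := integral_G_le (e := (d:ℝ)+α) (a := (d:ℝ)+α) (b := 0)
      hα1 hα2 hr (by linarith) le_rfl (by ring) hS (by rw [h0α]; linarith)
    rw [h0α, show (3:ℝ)/2 - 2/α - 0 + 1 = 5/2 - 2/α by ring] at hkey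
    exact hkey
  have hpow1 : r ^ (1-α/2) * ((r ^ α) ^ ((5:ℝ)/2 - 2/α) * r ^ (-((d:ℝ)+α)))
      = r ^ (-((d:ℝ)+1-α)) := by
    rw [← Real.rpow_mul hr.le, ← Real.rpow_add hr, ← Real.rpow_add hr]
    congr 1
    field_simp
    ring
  have hpow2 : r ^ (1-α/2) * (r ^ α) ^ q1 = r ^ (-((d:ℝ)+1-α)) := by
    rw [← Real.rpow_mul hr.le, ← Real.rpow_add hr]
    congr 1
    rw [hq1def]
    field_simp
    ring
  have hA : r ^ (1-α/2) * J ≤ (1/((5:ℝ)/2-2/α) + 1/(-q1)) * r ^ (-((d:ℝ)+1-α)) := by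
    have hrpownn : 0 ≤ r ^ (-((d:ℝ)+1-α)) := Real.rpow_nonneg hr.le _
    rcases le_or_gt (t/2) (r ^ α) with hcase | hcase
    · have h1 := hmain (t/2) hT
      rw [← hJdef] at h1
      have h2 : (t/2) ^ ((5:ℝ)/2 - 2/α) ≤ (r ^ α) ^ ((5:ℝ)/2 - 2/α) :=
        Real.rpow_le_rpow (by linarith) hcase (by linarith)
      calc r ^ (1-α/2) * J
          ≤ r ^ (1-α/2) * ((t/2) ^ ((5:ℝ)/2-2/α)/((5:ℝ)/2-2/α) * r ^ (-((d:ℝ)+α))) :=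
            mul_le_mul_of_nonneg_left h1 (Real.rpow_nonneg hr.le _)
        _ ≤ r ^ (1-α/2) * ((r^α) ^ ((5:ℝ)/2-2/α)/((5:ℝ)/2-2/α) * r ^ (-((d:ℝ)+α))) := by
            have h4 := Real.rpow_nonneg hr.le (1-α/2)
            have h5 := Real.rpow_nonneg hr.le (-((d:ℝ)+α))
            gcongr
        _ = (1/((5:ℝ)/2-2/α)) * (r ^ (1-α/2) * ((r^α) ^ ((5:ℝ)/2-2/α) * r ^ (-((d:ℝ)+α)))) := by
            ring
        _ = (1/((5:ℝ)/2-2/α)) * r ^ (-((d:ℝ)+1-α)) := by rw [hpow1]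
        _ ≤ (1/((5:ℝ)/2-2/α) + 1/(-q1)) * r ^ (-((d:ℝ)+1-α)) :=
            mul_le_mul_of_nonneg_right (by linarith) hrpownn
    · have hint : IntervalIntegrable (fun u : ℝ => u ^ ((1:ℝ)/2-2/α)
          * (u / (r + u^(1/α)) ^ ((d:ℝ)+α))) volume 0 (t/2) :=
        G_intble (e := (d:ℝ)+α) (r := r) hα1 hr hde hT
      have hint1 : IntervalIntegrable (fun u : ℝ => u ^ ((1:ℝ)/2-2/α)
          * (u / (r + u^(1/α)) ^ ((d:ℝ)+α))) volume 0 (r^α) :=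
        hint.mono_set (by
          rw [uIcc_of_le hrα.le, uIcc_of_le hT.le]
          exact Icc_subset_Icc le_rfl hcase.le)
      have hint2 : IntervalIntegrable (fun u : ℝ => u ^ ((1:ℝ)/2-2/α)
          * (u / (r + u^(1/α)) ^ ((d:ℝ)+α))) volume (r^α) (t/2) :=
        hint.mono_set (by
          rw [uIcc_of_le hcase.le, uIcc_of_le hT.le]
          exact Icc_subset_Icc hrα.le le_rfl)
      have hsplit : J = (∫ u in (0:ℝ)..(r^α), u ^ ((1:ℝ)/2-2/α)
            * (u / (r + u^(1/α)) ^ ((d:ℝ)+α)))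
          + ∫ u in (r^α)..(t/2), u ^ ((1:ℝ)/2-2/α)
            * (u / (r + u^(1/α)) ^ ((d:ℝ)+α)) := by
        rw [hJdef]
        exact (intervalIntegral.integral_add_adjacent_intervals hint1 hint2).symm
      have h1 := hmain (r^α) hrα
      have h2 := integral_G_tail (S := r^α) (T := t/2) d hα1 hα2 hd hr hrα hcase.le
      rw [← hq1def] at h2
      rw [hsplit]
      calc r ^ (1-α/2) * ((∫ u in (0:ℝ)..(r^α), u ^ ((1:ℝ)/2-2/α)
              * (u / (r + u^(1/α)) ^ ((d:ℝ)+α)))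
            + ∫ u in (r^α)..(t/2), u ^ ((1:ℝ)/2-2/α)
              * (u / (r + u^(1/α)) ^ ((d:ℝ)+α)))
          ≤ r ^ (1-α/2) * (((r^α) ^ ((5:ℝ)/2-2/α)/((5:ℝ)/2-2/α) * r ^ (-((d:ℝ)+α)))
              + (r^α) ^ q1 / (-q1)) :=
            mul_le_mul_of_nonneg_left (add_le_add h1 h2) (Real.rpow_nonneg hr.le _)
        _ = (1/((5:ℝ)/2-2/α)) * (r ^ (1-α/2) * ((r^α) ^ ((5:ℝ)/2-2/α) * r ^ (-((d:ℝ)+α))))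
              + (1/(-q1)) * (r ^ (1-α/2) * (r^α) ^ q1) := by ring
        _ = (1/((5:ℝ)/2-2/α)) * r ^ (-((d:ℝ)+1-α)) + (1/(-q1)) * r ^ (-((d:ℝ)+1-α)) := by
            rw [hpow1, hpow2]
        _ = (1/((5:ℝ)/2-2/α) + 1/(-q1)) * r ^ (-((d:ℝ)+1-α)) := by ring
  -- combine
  rcases le_total (r ^ (-((d:ℝ)+1-α))) (t ^ (2-2/α) * r ^ (-((d:ℝ)+α-1))) with hmin | hmin
  · rw [min_eq_left hmin]
    refine le_trans hA ?_
    have h0 : 0 ≤ r ^ (-((d:ℝ)+1-α)) := Real.rpow_nonneg hr.le _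
    exact mul_le_mul_of_nonneg_right (by linarith) h0
  · rw [min_eq_right hmin]
    refine le_trans hB ?_
    have h0 : 0 ≤ t ^ (2-2/α) * r ^ (-((d:ℝ)+α-1)) :=
      mul_nonneg (Real.rpow_nonneg ht.le _) (Real.rpow_nonneg hr.le _)
    exact mul_le_mul_of_nonneg_right (by linarith) h0
end
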